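/- Let H be a bounded self-adjoint operator on a complex Hilbert space ℋ, let 𝒦 be a complex Hilbert space, let F : ℋ → 𝒦 be a bounded linear operator, let λ ∈ ℝ be an eigenvalue of H, and let P be the orthogonal projection onto ker(H − λ·I). If F ∘ P ≠ 0, then ‖F ∘ (H − (λ+iy)·I)⁻¹ ∘ F*‖ tends to +∞ as y → 0 from the right. -/

import Mathlib

open ContinuousLinearMap Filter Topology
open scoped InnerProductSpace

/-! Write `z = λ + i y` and `g = (H - z)⁻¹ u` with `u = F* w`. Self-adjointness of `H` gives
`Im ⟪u, g⟫ = y ‖g‖²`, and testing `u = (H - z) g` against the eigenspace `ker (H - λ)` gives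
`‖P u‖ ≤ y ‖g‖`. Since `⟪w, T_z w⟫ = ⟪u, g⟫`, this yields `‖T_z‖ ‖w‖² ≥ ‖P u‖² / y`, and a `w`
with `P F* w ≠ 0` exists because `(F P)* = P F* ≠ 0`. -/

namespace Submodule

variable {𝕜 E : Type*} [RCLike 𝕜] [NormedAddCommGroup E] [InnerProductSpace 𝕜 E]

theorem norm_starProjection_le_of_forall_norm_inner_le (K : Submodule 𝕜 E)
    [K.HasOrthogonalProjection] {x : E} {C : ℝ} (hC : 0 ≤ C)
    (h : ∀ v ∈ K, ‖⟪v, x⟫_𝕜‖ ≤ C * ‖v‖) : ‖K.starProjection x‖ ≤ C := by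
  have hmem := K.starProjection_apply_mem x
  have hp : ⟪K.starProjection x, x⟫_𝕜 = ⟪K.starProjection x, K.starProjection x⟫_𝕜 := by
    rw [inner_starProjection_left_eq_right, inner_starProjection_left_eq_right,
      K.starProjection_eq_self_iff.mpr hmem]
  have hsq : ‖K.starProjection x‖ ^ 2 ≤ C * ‖K.starProjection x‖ := by
    simpa only [hp, inner_self_eq_norm_sq_to_K, norm_pow, RCLike.norm_ofReal, abs_norm] using
      h _ hmem
  rcases (norm_nonneg (K.starProjection x)).eq_or_lt with h0 | hpos
  · rw [← h0]; exact hC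
  · nlinarith

end Submodule

theorem ContinuousLinearMap.norm_inner_apply_self_le {𝕜 E : Type*} [RCLike 𝕜]
    [NormedAddCommGroup E] [InnerProductSpace 𝕜 E] (T : E →L[𝕜] E) (w : E) :
    ‖⟪w, T w⟫_𝕜‖ ≤ ‖T‖ * ‖w‖ ^ 2 :=
  calc ‖⟪w, T w⟫_𝕜‖ ≤ ‖w‖ * (‖T‖ * ‖w‖) :=
        (norm_inner_le_norm w (T w)).trans (by gcongr; exact T.le_opNorm w)
    _ = ‖T‖ * ‖w‖ ^ 2 := by ring

theorem ContinuousLinearMap.exists_apply_adjoint_ne_zero_of_comp_ne_zero {𝕜 E G : Type*}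
    [RCLike 𝕜] [NormedAddCommGroup E] [InnerProductSpace 𝕜 E] [CompleteSpace E]
    [NormedAddCommGroup G] [InnerProductSpace 𝕜 G] [CompleteSpace G]
    {P : E →L[𝕜] E} (hP : IsSelfAdjoint P) {F : E →L[𝕜] G} (hFP : F ∘L P ≠ 0) :
    ∃ w, P (adjoint F w) ≠ 0 := by
  by_contra! h
  have hPF : P ∘L adjoint F = 0 := ext h
  rw [← adjoint_adjoint (F ∘L P), adjoint_comp, hP.adjoint_eq, hPF, map_zero] at hFP
  exact hFP rfl

namespace IsSelfAdjoint

variable {ℋ : Type*} [NormedAddCommGroup ℋ] [InnerProductSpace ℂ ℋ] [CompleteSpace ℋ]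
  {H : ℋ →L[ℂ] ℋ}

theorem im_inner_sub_smul_one_apply_self (hH : IsSelfAdjoint H) (z : ℂ) (g : ℋ) :
    (⟪(H - z • 1) g, g⟫_ℂ).im = z.im * ‖g‖ ^ 2 := by
  have hHg : (⟪H g, g⟫_ℂ).im = 0 := hH.isSymmetric.im_inner_apply_self g
  simp [inner_self_eq_norm_sq_to_K, hHg, ← Complex.ofReal_pow, mul_comm]

theorem inner_sub_smul_one_apply_of_mem_ker (hH : IsSelfAdjoint H) {lam : ℝ} {v : ℋ}
    (hv : v ∈ LinearMap.ker ((H - (lam : ℂ) • 1 : ℋ →L[ℂ] ℋ) : ℋ →ₗ[ℂ] ℋ)) (z : ℂ) (g : ℋ) :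
    ⟪v, (H - z • 1) g⟫_ℂ = ((lam : ℂ) - z) * ⟪v, g⟫_ℂ := by
  have hHv : H v = (lam : ℂ) • v := by
    simpa [sub_eq_zero] using hv
  rw [sub_apply, inner_sub_right, ← adjoint_inner_left, hH.adjoint_eq, hHv, inner_smul_left,
    Complex.conj_ofReal, smul_apply, one_apply_eq_self, inner_smul_right, sub_mul]

theorem norm_starProjection_ker_sub_smul_one_apply_le (hH : IsSelfAdjoint H) (lam : ℝ) (z : ℂ)
    (g : ℋ) :
    ‖(LinearMap.ker ((H - (lam : ℂ) • 1 : ℋ →L[ℂ] ℋ) : ℋ →ₗ[ℂ] ℋ)).starProjection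
      ((H - z • 1) g)‖ ≤ ‖(lam : ℂ) - z‖ * ‖g‖ := by
  refine Submodule.norm_starProjection_le_of_forall_norm_inner_le _ (by positivity) fun v hv => ?_
  rw [hH.inner_sub_smul_one_apply_of_mem_ker hv, norm_mul]
  calc ‖(lam : ℂ) - z‖ * ‖⟪v, g⟫_ℂ‖ ≤ ‖(lam : ℂ) - z‖ * (‖v‖ * ‖g‖) := by
        gcongr; exact norm_inner_le_norm v g
    _ = _ := by ring

theorem isUnit_sub_smul_one (hH : IsSelfAdjoint H) {z : ℂ} (hz : z.im ≠ 0) :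
    IsUnit (H - z • 1) := by
  have hz' : z ∉ spectrum ℂ H := fun h => hz (hH.im_eq_zero_of_mem_spectrum h)
  simpa [Algebra.algebraMap_eq_smul_one] using (spectrum.notMem_iff.mp hz').neg

theorem norm_starProjection_sq_div_le_im_inner_resolvent (hH : IsSelfAdjoint H) (lam : ℝ)
    {y : ℝ} (hy : 0 < y) (u : ℋ) :
    ‖(LinearMap.ker ((H - (lam : ℂ) • 1 : ℋ →L[ℂ] ℋ) : ℋ →ₗ[ℂ] ℋ)).starProjection u‖ ^ 2 / y ≤
      (⟪u, Ring.inverse (H - ((lam : ℂ) + y * Complex.I) • 1) u⟫_ℂ).im := by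
  set z : ℂ := (lam : ℂ) + y * Complex.I
  set g := Ring.inverse (H - z • 1) u
  have hgu : (H - z • 1) g = u := by
    rw [← mul_apply_eq_comp,
      Ring.mul_inverse_cancel _ (hH.isUnit_sub_smul_one (by simp [z, hy.ne'])), one_apply_eq_self]
  have him : (⟪u, g⟫_ℂ).im = y * ‖g‖ ^ 2 := by
    simpa [z, hgu] using hH.im_inner_sub_smul_one_apply_self z g
  have hPu : ‖(LinearMap.ker ((H - (lam : ℂ) • 1 : ℋ →L[ℂ] ℋ) : ℋ →ₗ[ℂ] ℋ)).starProjection u‖ ≤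
      y * ‖g‖ := by
    simpa [z, hgu, abs_of_pos hy] using hH.norm_starProjection_ker_sub_smul_one_apply_le lam z g
  rw [him, div_le_iff₀ hy]
  linarith [pow_le_pow_left₀ (norm_nonneg _) hPu 2]

theorem norm_starProjection_adjoint_sq_div_le_norm_sandwiched_resolvent
    {𝒦 : Type*} [NormedAddCommGroup 𝒦] [InnerProductSpace ℂ 𝒦] [CompleteSpace 𝒦]
    (hH : IsSelfAdjoint H) (F : ℋ →L[ℂ] 𝒦) (lam : ℝ) {y : ℝ} (hy : 0 < y) (w : 𝒦) :
    ‖(LinearMap.ker ((H - (lam : ℂ) • 1 : ℋ →L[ℂ] ℋ) : ℋ →ₗ[ℂ] ℋ)).starProjection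
        (adjoint F w)‖ ^ 2 / y ≤
      ‖F ∘L Ring.inverse (H - ((lam : ℂ) + y * Complex.I) • 1) ∘L adjoint F‖ * ‖w‖ ^ 2 := by
  set T := F ∘L Ring.inverse (H - ((lam : ℂ) + y * Complex.I) • 1) ∘L adjoint F
  calc _ ≤ (⟪adjoint F w, Ring.inverse (H - ((lam : ℂ) + y * Complex.I) • 1)
          (adjoint F w)⟫_ℂ).im :=
        hH.norm_starProjection_sq_div_le_im_inner_resolvent lam hy _
    _ = (⟪w, T w⟫_ℂ).im := by rw [adjoint_inner_left]; rfl
    _ ≤ ‖⟪w, T w⟫_ℂ‖ := Complex.im_le_norm _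
    _ ≤ ‖T‖ * ‖w‖ ^ 2 := T.norm_inner_apply_self_le w

end IsSelfAdjoint

theorem sandwiched_resolvent_norm_tendsto_atTop_general
    {ℋ : Type*} [NormedAddCommGroup ℋ] [InnerProductSpace ℂ ℋ] [CompleteSpace ℋ]
    {𝒦 : Type*} [NormedAddCommGroup 𝒦] [InnerProductSpace ℂ 𝒦] [CompleteSpace 𝒦]
    (H : ℋ →L[ℂ] ℋ) (hH : IsSelfAdjoint H) (F : ℋ →L[ℂ] 𝒦) (lam : ℝ)
    (P : ℋ →L[ℂ] ℋ)
    (hP : P = (LinearMap.ker ((H - (lam : ℂ) • (1 : ℋ →L[ℂ] ℋ) : ℋ →L[ℂ] ℋ) : ℋ →ₗ[ℂ] ℋ)).subtypeL ∘L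
        Submodule.orthogonalProjectionOnto (LinearMap.ker ((H - (lam : ℂ) • (1 : ℋ →L[ℂ] ℋ) : ℋ →L[ℂ] ℋ) : ℋ →ₗ[ℂ] ℋ)))
    (hFP : F ∘L P ≠ 0) :
    Tendsto
      (fun y : ℝ =>
        ‖F ∘L Ring.inverse (H - ((lam : ℂ) + y * Complex.I) • (1 : ℋ →L[ℂ] ℋ)) ∘L adjoint F‖)
      (𝓝[>] 0) atTop := by
  subst hP
  set K := LinearMap.ker ((H - (lam : ℂ) • (1 : ℋ →L[ℂ] ℋ) : ℋ →L[ℂ] ℋ) : ℋ →ₗ[ℂ] ℋ)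
  obtain ⟨w, hw⟩ := exists_apply_adjoint_ne_zero_of_comp_ne_zero
    (isSelfAdjoint_starProjection K) hFP
  have hw0 : w ≠ 0 := by rintro rfl; simp at hw
  have hc : 0 < ‖K.starProjection (adjoint F w)‖ ^ 2 / ‖w‖ ^ 2 :=
    div_pos (pow_pos (norm_pos_iff.mpr hw) 2) (pow_pos (norm_pos_iff.mpr hw0) 2)
  refine tendsto_atTop_mono' _ ?_ (tendsto_inv_nhdsGT_zero.const_mul_atTop hc)
  filter_upwards [self_mem_nhdsWithin] with y (hy : 0 < y)
  calc _ = ‖K.starProjection (adjoint F w)‖ ^ 2 / y / ‖w‖ ^ 2 := by ring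
    _ ≤ _ := (div_le_iff₀ (by positivity)).mpr
      (hH.norm_starProjection_adjoint_sq_div_le_norm_sandwiched_resolvent F lam hy w)

/-- If `lam` is an eigenvalue of the bounded self-adjoint operator `H`, `P` is the orthogonal
projection onto `ker (H - lam)`, and `F ∘ P ≠ 0`, then the operator norm of the sandwiched
resolvent `F (H - (lam + i y))⁻¹ F*` blows up as `y → 0⁺`. -/
theorem sandwiched_resolvent_norm_tendsto_atTop
    {ℋ : Type*} [NormedAddCommGroup ℋ] [InnerProductSpace ℂ ℋ] [CompleteSpace ℋ]
    {𝒦 : Type*} [NormedAddCommGroup 𝒦] [InnerProductSpace ℂ 𝒦] [CompleteSpace 𝒦]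
    (H : ℋ →L[ℂ] ℋ) (hH : IsSelfAdjoint H) (F : ℋ →L[ℂ] 𝒦) (lam : ℝ)
    (heig : LinearMap.ker ((H - (lam : ℂ) • (1 : ℋ →L[ℂ] ℋ) : ℋ →L[ℂ] ℋ) : ℋ →ₗ[ℂ] ℋ) ≠ ⊥)
    (P : ℋ →L[ℂ] ℋ)
    (hP : P = (LinearMap.ker ((H - (lam : ℂ) • (1 : ℋ →L[ℂ] ℋ) : ℋ →L[ℂ] ℋ) : ℋ →ₗ[ℂ] ℋ)).subtypeL ∘L
        Submodule.orthogonalProjectionOnto (LinearMap.ker ((H - (lam : ℂ) • (1 : ℋ →L[ℂ] ℋ) : ℋ →L[ℂ] ℋ) : ℋ →ₗ[ℂ] ℋ)))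
    (hFP : F ∘L P ≠ 0) :
    Tendsto
      (fun y : ℝ =>
        ‖F ∘L Ring.inverse (H - ((lam : ℂ) + y * Complex.I) • (1 : ℋ →L[ℂ] ℋ)) ∘L adjoint F‖)
      (𝓝[>] 0) atTop :=
  sandwiched_resolvent_norm_tendsto_atTop_general H hH F lam P hP hFP
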